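/- Suppose u ∈ V satisfies a(u, v) = f(v) for all v ∈ V. Let V_n and V^R be finite-dimensional subspaces of V, let u_n be a Galerkin solution on V_n, and let u^R be a Galerkin solution on V^R. Then the error of the reduced-order solution with respect to the snapshot satisfies ‖u_n − u^R‖_V ≤ (γ/α)(1 + γ/α) ‖u − P_{V_n} u‖_V + (γ/α) ‖u_n − P_{V^R} u_n‖_V. -/

import Mathlib

/-!
Both Galerkin errors are controlled by Céa's lemma, `‖u - u_W‖ ≤ (γ/α) ‖u - q‖` for every
`q ∈ W`. Applied on `V_n` with `q = P_{V_n} u` and on `V^R` with `q = P_{V^R} u_n`, and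
combined with `‖u - P_{V^R} u_n‖ ≤ ‖u - u_n‖ + ‖u_n - P_{V^R} u_n‖`, the triangle inequality
`‖u_n - u^R‖ ≤ ‖u - u_n‖ + ‖u - u^R‖` gives the bound.
-/

open scoped RealInnerProductSpace

/-- Orthogonal projection onto a submodule, as a plain function; it equals the usual
orthogonal projection whenever the submodule is finite-dimensional. -/
noncomputable def orthProj {V : Type*} [NormedAddCommGroup V] [InnerProductSpace ℝ V]
    (K : Submodule ℝ V) (x : V) : V := by
  classical
  exact if h : FiniteDimensional ℝ K then
    haveI := h
    (K.orthogonalProjectionOnto x : V)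
  else 0

theorem orthProj_mem {V : Type*} [NormedAddCommGroup V] [InnerProductSpace ℝ V]
    (K : Submodule ℝ V) (x : V) : orthProj K x ∈ K := by
  unfold orthProj
  split_ifs
  · exact Submodule.coe_mem _
  · exact K.zero_mem

section Galerkin

variable {V : Type*} [NormedAddCommGroup V] [Module ℝ V]
  {a : V →ₗ[ℝ] V →ₗ[ℝ] ℝ} {f : V →ₗ[ℝ] ℝ} {α γ : ℝ}

theorem eq_zero_of_abs_le_mul_norm_of_neg
    (hcont : ∀ v w : V, |a v w| ≤ γ * ‖v‖ * ‖w‖) (hγ : γ < 0) (v : V) : v = 0 := by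
  have h : 0 ≤ γ * ‖v‖ ^ 2 := by nlinarith [abs_nonneg (a v v), hcont v v]
  have hsq : ‖v‖ ^ 2 ≤ 0 := nonpos_of_mul_nonneg_right h hγ
  exact norm_eq_zero.mp (pow_eq_zero_iff two_ne_zero |>.mp (le_antisymm hsq (sq_nonneg _)))

theorem galerkin_orthogonality {u uW : V} {W : Submodule ℝ V}
    (hu : ∀ v, a u v = f v) (hGal : ∀ w ∈ W, a uW w = f w) :
    ∀ w ∈ W, a (u - uW) w = 0 := by
  intro w hw
  rw [map_sub, LinearMap.sub_apply, hu w, hGal w hw, sub_self]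

theorem cea_lemma (hα : 0 < α) (hγ : 0 ≤ γ)
    (hcoer : ∀ v : V, α * ‖v‖ ^ 2 ≤ a v v)
    (hcont : ∀ v w : V, |a v w| ≤ γ * ‖v‖ * ‖w‖)
    {u uW q : V} {W : Submodule ℝ V} (hu : ∀ v, a u v = f v)
    (huW : uW ∈ W) (hGal : ∀ w ∈ W, a uW w = f w) (hq : q ∈ W) :
    ‖u - uW‖ ≤ γ / α * ‖u - q‖ := by
  set e := u - uW
  have hsplit : a e e = a e (u - q) := by
    calc a e e = a e ((u - q) + (q - uW)) := by rw [sub_add_sub_cancel]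
      _ = a e (u - q) := by
        rw [map_add, galerkin_orthogonality hu hGal _ (W.sub_mem hq huW), add_zero]
  have hsq : α * ‖e‖ * ‖e‖ ≤ γ * ‖u - q‖ * ‖e‖ := by
    calc α * ‖e‖ * ‖e‖ = α * ‖e‖ ^ 2 := by ring
      _ ≤ a e (u - q) := hsplit ▸ hcoer e
      _ ≤ γ * ‖e‖ * ‖u - q‖ := (le_abs_self _).trans (hcont _ _)
      _ = γ * ‖u - q‖ * ‖e‖ := by ring
  rw [div_mul_eq_mul_div, le_div_iff₀ hα, mul_comm]
  rcases (norm_nonneg e).eq_or_lt with he | he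
  · rw [← he, mul_zero]; positivity
  · exact le_of_mul_le_mul_right hsq he

end Galerkin

theorem rom_error_wrt_snapshot_general
    {V : Type*} [NormedAddCommGroup V] [InnerProductSpace ℝ V]
    (a : V →ₗ[ℝ] V →ₗ[ℝ] ℝ) (f : V →ₗ[ℝ] ℝ)
    (α γ : ℝ) (hα : 0 < α)
    (hcoer : ∀ v : V, α * ‖v‖ ^ 2 ≤ a v v)
    (hcont : ∀ v w : V, |a v w| ≤ γ * ‖v‖ * ‖w‖)
    (u : V) (hu : ∀ v : V, a u v = f v)
    (Vn VR : Submodule ℝ V)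
    (un : V) (hun : un ∈ Vn) (hGaln : ∀ w ∈ Vn, a un w = f w)
    (uR : V) (huR : uR ∈ VR) (hGalR : ∀ w ∈ VR, a uR w = f w) :
    ‖un - uR‖ ≤ (γ / α) * (1 + γ / α) * ‖u - orthProj Vn u‖
      + (γ / α) * ‖un - orthProj VR un‖ := by
  rcases lt_or_ge γ 0 with hγ | hγ
  · have h0 := eq_zero_of_abs_le_mul_norm_of_neg hcont hγ
    simp [h0 (un - uR), h0 (u - orthProj Vn u), h0 (un - orthProj VR un)]
  have hk : 0 ≤ γ / α := div_nonneg hγ hα.le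
  have hn : ‖u - un‖ ≤ γ / α * ‖u - orthProj Vn u‖ :=
    cea_lemma hα hγ hcoer hcont hu hun hGaln (orthProj_mem Vn u)
  have hR : ‖u - uR‖ ≤ γ / α * ‖u - orthProj VR un‖ :=
    cea_lemma hα hγ hcoer hcont hu huR hGalR (orthProj_mem VR un)
  calc ‖un - uR‖ = ‖(u - uR) - (u - un)‖ := by rw [sub_sub_sub_cancel_left]
    _ ≤ ‖u - un‖ + ‖u - uR‖ := by rw [add_comm]; exact norm_sub_le _ _
    _ ≤ ‖u - un‖ + γ / α * (‖u - un‖ + ‖un - orthProj VR un‖) := by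
        gcongr
        exact hR.trans (mul_le_mul_of_nonneg_left (norm_sub_le_norm_sub_add_norm_sub _ _ _) hk)
    _ = (1 + γ / α) * ‖u - un‖ + γ / α * ‖un - orthProj VR un‖ := by ring
    _ ≤ (1 + γ / α) * (γ / α * ‖u - orthProj Vn u‖) + γ / α * ‖un - orthProj VR un‖ := by
        gcongr
    _ = _ := by ring

/-- **Error of the reduced-order solution with respect to the snapshot.** `‖u_n - u^R‖ ≤ (γ/α)(1 + γ/α)‖u - P_{V_n} u‖ + (γ/α)‖u_n - P_{V^R} u_n‖`. -/
theorem rom_error_wrt_snapshot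
    {V : Type*} [NormedAddCommGroup V] [InnerProductSpace ℝ V]
    (a : V →ₗ[ℝ] V →ₗ[ℝ] ℝ) (f : V →ₗ[ℝ] ℝ)
    (α γ : ℝ) (hα : 0 < α)
    (hcoer : ∀ v : V, α * ‖v‖ ^ 2 ≤ a v v)
    (hcont : ∀ v w : V, |a v w| ≤ γ * ‖v‖ * ‖w‖)
    (u : V) (hu : ∀ v : V, a u v = f v)
    (Vn VR : Submodule ℝ V) [FiniteDimensional ℝ ↥Vn] [FiniteDimensional ℝ ↥VR]
    (un : V) (hun : un ∈ Vn) (hGaln : ∀ w ∈ Vn, a un w = f w)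
    (uR : V) (huR : uR ∈ VR) (hGalR : ∀ w ∈ VR, a uR w = f w) :
    ‖un - uR‖ ≤ (γ / α) * (1 + γ / α) * ‖u - orthProj Vn u‖
      + (γ / α) * ‖un - orthProj VR un‖ :=
  rom_error_wrt_snapshot_general a f α γ hα hcoer hcont u hu Vn VR un hun hGaln uR huR hGalR
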